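/- arXiv:2210.00353 — 2 statements merged into one kernel-verified Lean document; each statement's English description precedes it below -/
import Mathlib

section
/- If u ≥ 0, then the maximal real part over the spectrum of J(u) equals −d + uK: max_{η ∈ σ(J(u))} Re(η) = −d + uK. -/
open Matrix Complex Polynomial
open scoped Kronecker

/-- The complex spectrum of a real square matrix: the set of complex roots of its
characteristic polynomial. -/
noncomputable def specC {n : Type*} [Fintype n] [DecidableEq n]
    (M : Matrix n n ℝ) : Set ℂ :=
  {z : ℂ | ((M.map (Complex.ofReal)).charpoly).IsRoot z}

/-- The Jacobian matrix `J(u)` of the belief dynamics at the origin. -/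
noncomputable def Jmat {Na No : ℕ}
    (Aa : Matrix (Fin Na) (Fin Na) ℝ) (Ao : Matrix (Fin No) (Fin No) ℝ)
    (d u α γ β δ : ℝ) : Matrix (Fin Na × Fin No) (Fin Na × Fin No) ℝ :=
  (-d + u * α) • (1 : Matrix (Fin Na × Fin No) (Fin Na × Fin No) ℝ)
    + (u * γ) • (Aa ⊗ₖ (1 : Matrix (Fin No) (Fin No) ℝ))
    + (u * β) • ((1 : Matrix (Fin Na) (Fin Na) ℝ) ⊗ₖ Ao)
    + (u * δ) • (Aa ⊗ₖ Ao)

/-! The matrix `J(u)` is the polynomial `a + b x + c y + e x y` evaluated at the commuting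
matrices `x = A_a ⊗ I` and `y = I ⊗ A_o`, so its spectrum is `{a + b λ + c μ + e λ μ}` over
`λ ∈ σ(A_a)`, `μ ∈ σ(A_o)`. Kronecker products `v ⊗ w` of eigenvectors realise every such value.
Conversely, `x` and `y` preserve each eigenspace of `J(u)` and so share an eigenvector in it;
its eigenvalues for `x` and `y` lie in `σ(A_a)` and `σ(A_o)` because
`charpoly (A ⊗ I_N) = (charpoly A)^N`. Taking real parts, the spectral abscissa of `J(u)` is the
image of `K` under the map `t ↦ -d + u t`, which is monotone for `u ≥ 0`. -/

lemma Polynomial.IsRoot.of_pow {R : Type*} [CommSemiring R] [NoZeroDivisors R] {p : R[X]}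
    {k : ℕ} {z : R} (h : (p ^ k).IsRoot z) : p.IsRoot z :=
  eq_zero_of_pow_eq_zero (by rwa [IsRoot, eval_pow] at h)

namespace Module.End

lemma HasEigenvector.apply_eq_smul_of_bilinear {R V : Type*} [CommRing R] [AddCommGroup V]
    [Module R V] {f g : End R V} {v : V} {μ ν : R}
    (hf : f.HasEigenvector μ v) (hg : g.HasEigenvector ν v) (a b c e : R) :
    (a • 1 + b • f + c • g + e • (f * g)) v = (a + b * μ + c * ν + e * μ * ν) • v := by
  simp only [LinearMap.add_apply, LinearMap.smul_apply, one_apply, mul_apply,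
    hf.apply_eq_smul, hg.apply_eq_smul, map_smul, smul_smul]
  module

variable {K V : Type*} [Field K] [IsAlgClosed K] [AddCommGroup V] [Module K V]
  [FiniteDimensional K V]

lemma exists_inf_eigenspace_ne_bot (f : End K V) {p : Submodule K V} (hp : p ≠ ⊥)
    (hfp : ∀ x ∈ p, f x ∈ p) : ∃ μ, p ⊓ f.eigenspace μ ≠ ⊥ := by
  have : Nontrivial p := Submodule.nontrivial_iff_ne_bot.mpr hp
  obtain ⟨μ, hμ⟩ := exists_eigenvalue (f.restrict hfp)
  obtain ⟨v, hv⟩ := hμ.exists_hasEigenvector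
  refine ⟨μ, (Submodule.ne_bot_iff _).mpr ⟨v, ⟨v.2, ?_⟩, by simpa using hv.2⟩⟩
  exact mem_eigenspace_iff.mpr (congr_arg Subtype.val hv.apply_eq_smul)

lemma exists_hasEigenvector_of_commute {f g h : End K V} (hfg : Commute f g)
    (hfh : Commute f h) (hgh : Commute g h) {η : K} (hη : h.HasEigenvalue η) :
    ∃ v μ ν, f.HasEigenvector μ v ∧ g.HasEigenvector ν v ∧ h.HasEigenvector η v := by
  obtain ⟨μ, hμ⟩ := f.exists_inf_eigenspace_ne_bot hη
    (mapsTo_genEigenspace_of_comm hfh.symm η 1)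
  obtain ⟨ν, hν⟩ := g.exists_inf_eigenspace_ne_bot hμ fun x hx =>
    ⟨mapsTo_genEigenspace_of_comm hgh.symm η 1 hx.1, mapsTo_genEigenspace_of_comm hfg μ 1 hx.2⟩
  obtain ⟨v, ⟨⟨hvh, hvf⟩, hvg⟩, hv0⟩ := (Submodule.ne_bot_iff _).mp hν
  exact ⟨v, μ, ν, ⟨hvf, hv0⟩, ⟨hvg, hv0⟩, ⟨hvh, hv0⟩⟩

lemma exists_hasEigenvalue_of_hasEigenvalue_bilinear {f g : End K V} (hfg : Commute f g)
    (a b c e : K) {η : K} (hη : (a • 1 + b • f + c • g + e • (f * g)).HasEigenvalue η) :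
    ∃ μ ν, f.HasEigenvalue μ ∧ g.HasEigenvalue ν ∧ η = a + b * μ + c * ν + e * μ * ν := by
  have hfh : Commute f (a • 1 + b • f + c • g + e • (f * g)) :=
    ((((Commute.one_right f).smul_right a).add_right ((Commute.refl f).smul_right b)).add_right
      (hfg.smul_right c)).add_right (((Commute.refl f).mul_right hfg).smul_right e)
  have hgh : Commute g (a • 1 + b • f + c • g + e • (f * g)) :=
    ((((Commute.one_right g).smul_right a).add_right (hfg.symm.smul_right b)).add_right
      ((Commute.refl g).smul_right c)).add_right
        ((hfg.symm.mul_right (Commute.refl g)).smul_right e)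
  obtain ⟨v, μ, ν, hf, hg, hh⟩ := exists_hasEigenvector_of_commute hfg hfh hgh hη
  refine ⟨μ, ν, hasEigenvalue_of_hasEigenvector hf, hasEigenvalue_of_hasEigenvector hg,
    smul_left_injective K hh.2 ?_⟩
  dsimp only
  rw [← hh.apply_eq_smul, hf.apply_eq_smul_of_bilinear hg]

end Module.End

namespace Matrix

variable {m n : Type*}

lemma kronecker_vec_ne_zero {R : Type*} [Semiring R] [NoZeroDivisors R] {v : m → R}
    {w : n → R} (hv : v ≠ 0) (hw : w ≠ 0) : (fun p : m × n => v p.1 * w p.2) ≠ 0 := by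
  obtain ⟨i, hi⟩ := Function.ne_iff.mp hv
  obtain ⟨j, hj⟩ := Function.ne_iff.mp hw
  exact Function.ne_iff.mpr ⟨(i, j), mul_ne_zero hi hj⟩

variable [Fintype m] [Fintype n]

lemma kronecker_mulVec_mul {R : Type*} [CommSemiring R] (A : Matrix m m R) (B : Matrix n n R)
    (v : m → R) (w : n → R) :
    (A ⊗ₖ B) *ᵥ (fun p => v p.1 * w p.2) = fun p => (A *ᵥ v) p.1 * (B *ᵥ w) p.2 := by
  funext p
  simp only [mulVec, dotProduct, Fintype.sum_prod_type, kroneckerMap_apply, Finset.sum_mul_sum]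
  exact Finset.sum_congr rfl fun k _ => Finset.sum_congr rfl fun l _ => by ring

lemma kronecker_mulVec_eq_smul {R : Type*} [CommSemiring R] {A : Matrix m m R}
    {B : Matrix n n R} {v : m → R} {w : n → R} {μ ν : R} (hv : A *ᵥ v = μ • v)
    (hw : B *ᵥ w = ν • w) :
    (A ⊗ₖ B) *ᵥ (fun p => v p.1 * w p.2) = (μ * ν) • fun p => v p.1 * w p.2 := by
  rw [kronecker_mulVec_mul, hv, hw]
  funext p
  simp only [Pi.smul_apply, smul_eq_mul]
  ring

variable [DecidableEq m] [DecidableEq n]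

lemma kronecker_one_mul_one_kronecker {R : Type*} [CommSemiring R] (A : Matrix m m R)
    (B : Matrix n n R) : (A ⊗ₖ (1 : Matrix n n R)) * ((1 : Matrix m m R) ⊗ₖ B) = A ⊗ₖ B := by
  rw [← mul_kronecker_mul, mul_one, one_mul]

lemma commute_kronecker_one_one_kronecker {R : Type*} [CommSemiring R] (A : Matrix m m R)
    (B : Matrix n n R) : Commute (A ⊗ₖ (1 : Matrix n n R)) ((1 : Matrix m m R) ⊗ₖ B) := by
  rw [Commute, SemiconjBy, kronecker_one_mul_one_kronecker, ← mul_kronecker_mul, mul_one,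
    one_mul]

section CommRing

variable {R : Type*} [CommRing R]

lemma charmatrix_kronecker_one (A : Matrix m m R) :
    charmatrix (A ⊗ₖ (1 : Matrix n n R)) = charmatrix A ⊗ₖ (1 : Matrix n n R[X]) := by
  ext ⟨i, j⟩ ⟨k, l⟩
  by_cases hik : i = k <;> by_cases hjl : j = l <;> simp [hik, hjl]

lemma charmatrix_one_kronecker (B : Matrix n n R) :
    charmatrix ((1 : Matrix m m R) ⊗ₖ B) = (1 : Matrix m m R[X]) ⊗ₖ charmatrix B := by
  ext ⟨i, j⟩ ⟨k, l⟩
  by_cases hik : i = k <;> by_cases hjl : j = l <;> simp [hik, hjl]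

lemma charpoly_kronecker_one (A : Matrix m m R) :
    (A ⊗ₖ (1 : Matrix n n R)).charpoly = A.charpoly ^ Fintype.card n := by
  rw [charpoly, charmatrix_kronecker_one, det_kronecker, det_one, one_pow, mul_one, charpoly]

lemma charpoly_one_kronecker (B : Matrix n n R) :
    ((1 : Matrix m m R) ⊗ₖ B).charpoly = B.charpoly ^ Fintype.card m := by
  rw [charpoly, charmatrix_one_kronecker, det_kronecker, det_one, one_pow, one_mul, charpoly]

end CommRing

variable {K : Type*} [Field K]

lemma isRoot_charpoly_iff_hasEigenvalue (M : Matrix n n K) (z : K) :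
    M.charpoly.IsRoot z ↔ Module.End.HasEigenvalue (toLinAlgEquiv' M) z := by
  rw [← mem_spectrum_iff_isRoot_charpoly, ← AlgEquiv.spectrum_eq toLinAlgEquiv',
    Module.End.hasEigenvalue_iff_mem_spectrum]

theorem isRoot_charpoly_bilinear_kronecker_iff [IsAlgClosed K] (A : Matrix m m K)
    (B : Matrix n n K) (a b c e z : K) :
    (a • 1 + b • (A ⊗ₖ 1) + c • (1 ⊗ₖ B) + e • (A ⊗ₖ B)).charpoly.IsRoot z ↔
      ∃ μ, A.charpoly.IsRoot μ ∧ ∃ ν, B.charpoly.IsRoot ν ∧ z = a + b * μ + c * ν + e * μ * ν := by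
  set P : Module.End K (m × n → K) := toLinAlgEquiv' (A ⊗ₖ (1 : Matrix n n K))
  set Q : Module.End K (m × n → K) := toLinAlgEquiv' ((1 : Matrix m m K) ⊗ₖ B)
  have hM : toLinAlgEquiv' (a • 1 + b • (A ⊗ₖ 1) + c • (1 ⊗ₖ B) + e • (A ⊗ₖ B)) =
      a • 1 + b • P + c • Q + e • (P * Q) := by
    rw [← kronecker_one_mul_one_kronecker A B]
    simp only [map_add, map_smul, map_one, map_mul, P, Q]
  rw [isRoot_charpoly_iff_hasEigenvalue, hM]
  constructor
  · intro h
    obtain ⟨μ, ν, hμ, hν, rfl⟩ := Module.End.exists_hasEigenvalue_of_hasEigenvalue_bilinear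
      ((commute_kronecker_one_one_kronecker A B).map toLinAlgEquiv') a b c e h
    rw [← isRoot_charpoly_iff_hasEigenvalue, charpoly_kronecker_one] at hμ
    rw [← isRoot_charpoly_iff_hasEigenvalue, charpoly_one_kronecker] at hν
    exact ⟨μ, hμ.of_pow, ν, hν.of_pow, rfl⟩
  · rintro ⟨μ, hμ, ν, hν, rfl⟩
    obtain ⟨v, hv⟩ := ((isRoot_charpoly_iff_hasEigenvalue A μ).mp hμ).exists_hasEigenvector
    obtain ⟨w, hw⟩ := ((isRoot_charpoly_iff_hasEigenvalue B ν).mp hν).exists_hasEigenvector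
    have hvw := kronecker_vec_ne_zero hv.2 hw.2
    have hP : P.HasEigenvector μ (fun p => v p.1 * w p.2) := by
      refine ⟨Module.End.mem_eigenspace_iff.mpr ?_, hvw⟩
      simpa [P] using kronecker_mulVec_eq_smul hv.apply_eq_smul
        ((one_mulVec w).trans (one_smul K w).symm)
    have hQ : Q.HasEigenvector ν (fun p => v p.1 * w p.2) := by
      refine ⟨Module.End.mem_eigenspace_iff.mpr ?_, hvw⟩
      simpa [Q] using kronecker_mulVec_eq_smul ((one_mulVec v).trans (one_smul K v).symm)
        hw.apply_eq_smul
    exact Module.End.hasEigenvalue_of_hasEigenvector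
      ⟨Module.End.mem_eigenspace_iff.mpr (hP.apply_eq_smul_of_bilinear hQ a b c e), hvw⟩

end Matrix

lemma Jmat_map_ofReal {Na No : ℕ} (Aa : Matrix (Fin Na) (Fin Na) ℝ)
    (Ao : Matrix (Fin No) (Fin No) ℝ) (d u α γ β δ : ℝ) :
    (Jmat Aa Ao d u α γ β δ).map ofReal =
      ((-d + u * α : ℝ) : ℂ) • 1 + ((u * γ : ℝ) : ℂ) • (Aa.map ofReal ⊗ₖ 1)
        + ((u * β : ℝ) : ℂ) • (1 ⊗ₖ Ao.map ofReal)
        + ((u * δ : ℝ) : ℂ) • (Aa.map ofReal ⊗ₖ Ao.map ofReal) := by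
  ext ⟨i, j⟩ ⟨k, l⟩
  by_cases hik : i = k <;> by_cases hjl : j = l <;> simp [Jmat, one_apply, hik, hjl]

lemma re_bilinear (d u α γ β δ : ℝ) (l m : ℂ) :
    (((-d + u * α : ℝ) : ℂ) + ((u * γ : ℝ) : ℂ) * l + ((u * β : ℝ) : ℂ) * m
      + ((u * δ : ℝ) : ℂ) * l * m).re
      = -d + u * ((α : ℂ) + (γ : ℂ) * l + (β : ℂ) * m + (δ : ℂ) * l * m).re := by
  simp only [add_re, ofReal_re, re_ofReal_mul, mul_assoc]
  ring

theorem max_real_part_spectrum_general {Na No : ℕ}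
    (Aa : Matrix (Fin Na) (Fin Na) ℝ) (Ao : Matrix (Fin No) (Fin No) ℝ)
    (d u α γ β δ K : ℝ) (hu : 0 ≤ u)
    (hK : IsGreatest {x : ℝ | ∃ l ∈ specC Aa, ∃ m ∈ specC Ao,
        x = ((α : ℂ) + (γ : ℂ) * l + (β : ℂ) * m + (δ : ℂ) * l * m).re} K) :
    IsGreatest {x : ℝ | ∃ η ∈ specC (Jmat Aa Ao d u α γ β δ), x = η.re} (-d + u * K) := by
  have hspec : {x : ℝ | ∃ η ∈ specC (Jmat Aa Ao d u α γ β δ), x = η.re} =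
      (fun x => -d + u * x) '' {x : ℝ | ∃ l ∈ specC Aa, ∃ m ∈ specC Ao,
        x = ((α : ℂ) + (γ : ℂ) * l + (β : ℂ) * m + (δ : ℂ) * l * m).re} := by
    ext x
    simp only [specC, Set.mem_ofPred_eq, Set.mem_image, Jmat_map_ofReal,
      isRoot_charpoly_bilinear_kronecker_iff]
    constructor <;> rintro ⟨_, ⟨l, hl, m, hm, rfl⟩, rfl⟩ <;>
      exact ⟨_, ⟨l, hl, m, hm, rfl⟩, (re_bilinear d u α γ β δ l m).symm⟩
  rw [hspec]
  exact (monotone_id.const_mul hu |>.const_add (-d)).map_isGreatest hK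

/-- If `u ≥ 0` and `K` is the maximum of `Re(α + γλ + βμ + δλμ)` over
`λ ∈ σ(A_a), μ ∈ σ(A_o)`, then the maximal real part over `σ(J(u))` is `−d + uK`. -/
theorem max_real_part_spectrum {Na No : ℕ} (hNa : 1 ≤ Na) (hNo : 1 ≤ No)
    (Aa : Matrix (Fin Na) (Fin Na) ℝ) (Ao : Matrix (Fin No) (Fin No) ℝ)
    (d u α γ β δ K : ℝ) (hu : 0 ≤ u)
    (hK : IsGreatest {x : ℝ | ∃ l ∈ specC Aa, ∃ m ∈ specC Ao,
        x = ((α : ℂ) + (γ : ℂ) * l + (β : ℂ) * m + (δ : ℂ) * l * m).re} K) :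
    IsGreatest {x : ℝ | ∃ η ∈ specC (Jmat Aa Ao d u α γ β δ), x = η.re} (-d + u * K) :=
  max_real_part_spectrum_general Aa Ao d u α γ β δ K hu hK
end

section
/- Suppose K > 0. If 0 ≤ u < u* := d/K, then every eigenvalue η ∈ σ(J(u)) satisfies Re(η) < 0. -/
open Matrix Complex Polynomial
open scoped Kronecker

/-- A complex number is a root of the characteristic polynomial iff `z•1 - M` is singular. -/
lemma isRoot_charpoly_iff_det {n : Type*} [Fintype n] [DecidableEq n]
    (M : Matrix n n ℂ) (z : ℂ) :
    M.charpoly.IsRoot z ↔ (z • (1 : Matrix n n ℂ) - M).det = 0 := by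
  have h : (M.charmatrix).map (Polynomial.evalRingHom z) = z • (1 : Matrix n n ℂ) - M := by
    ext i j
    by_cases hij : i = j
    · subst hij
      simp [Matrix.charmatrix_apply_eq, Matrix.map_apply]
    · simp [Matrix.charmatrix_apply_ne _ _ _ hij, Matrix.map_apply, Matrix.one_apply_ne hij]
  have h2 : M.charpoly.eval z = (z • (1 : Matrix n n ℂ) - M).det := by
    have h3 := RingHom.map_det (Polynomial.evalRingHom z) M.charmatrix
    rw [RingHom.mapMatrix_apply, h] at h3
    simpa [Matrix.charpoly] using h3
  unfold Polynomial.IsRoot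
  rw [h2]

/-- Root of charpoly iff existence of an eigenvector. -/
lemma isRoot_charpoly_iff_exists_vec {n : Type*} [Fintype n] [DecidableEq n]
    (M : Matrix n n ℂ) (z : ℂ) :
    M.charpoly.IsRoot z ↔ ∃ v : n → ℂ, v ≠ 0 ∧ M.mulVec v = z • v := by
  rw [isRoot_charpoly_iff_det, ← Matrix.exists_mulVec_eq_zero_iff]
  constructor
  · rintro ⟨v, hv0, hv⟩
    refine ⟨v, hv0, ?_⟩
    rw [Matrix.sub_mulVec, Matrix.smul_mulVec, Matrix.one_mulVec] at hv
    linear_combination (norm := module) -hv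
  · rintro ⟨v, hv0, hv⟩
    refine ⟨v, hv0, ?_⟩
    rw [Matrix.sub_mulVec, Matrix.smul_mulVec, Matrix.one_mulVec, hv, sub_self]

/-- Any endomorphism preserving a nonzero subspace of a f.d. complex space has an
eigenvector inside that subspace. -/
lemma exists_eigen_of_invariant {n : Type*} [Fintype n]
    (p : Submodule ℂ (n → ℂ)) (hp : p ≠ ⊥) (g : Module.End ℂ (n → ℂ))
    (hg : ∀ x ∈ p, g x ∈ p) :
    ∃ (μ : ℂ) (v : n → ℂ), v ∈ p ∧ v ≠ 0 ∧ g v = μ • v := by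
  haveI : Nontrivial p := Submodule.nontrivial_iff_ne_bot.mpr hp
  obtain ⟨μ, hμ⟩ := Module.End.exists_eigenvalue (g.restrict hg)
  obtain ⟨w, hw⟩ := hμ.exists_hasEigenvector
  have h1 : (g.restrict hg) w = μ • w := Module.End.mem_eigenspace_iff.mp hw.1
  refine ⟨μ, (w : n → ℂ), w.2, ?_, ?_⟩
  · simpa using hw.2
  · have := congrArg (Subtype.val) h1
    simpa [LinearMap.restrict_apply] using this

/-- If `K > 0` and `0 ≤ u < u* = d/K`, then every eigenvalue of `J(u)` has negative
real part. -/
theorem spectrum_stable_below_ustar {Na No : ℕ} (hNa : 1 ≤ Na) (hNo : 1 ≤ No)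
    (Aa : Matrix (Fin Na) (Fin Na) ℝ) (Ao : Matrix (Fin No) (Fin No) ℝ)
    (d u α γ β δ K : ℝ) (hd : 0 < d)
    (hK : IsGreatest {x : ℝ | ∃ l ∈ specC Aa, ∃ m ∈ specC Ao,
        x = ((α : ℂ) + (γ : ℂ) * l + (β : ℂ) * m + (δ : ℂ) * l * m).re} K)
    (hKpos : 0 < K) (hu : 0 ≤ u) (hu' : u < d / K) :
    ∀ η ∈ specC (Jmat Aa Ao d u α γ β δ), η.re < 0 := by
  intro η hη
  simp only [specC, Set.mem_setOf_eq] at hη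
  set Aac : Matrix (Fin Na) (Fin Na) ℂ := Aa.map (Complex.ofReal) with hAac
  set Aoc : Matrix (Fin No) (Fin No) ℂ := Ao.map (Complex.ofReal) with hAoc
  set A1 : Matrix (Fin Na × Fin No) (Fin Na × Fin No) ℂ :=
    Aac ⊗ₖ (1 : Matrix (Fin No) (Fin No) ℂ) with hA1
  set A2 : Matrix (Fin Na × Fin No) (Fin Na × Fin No) ℂ :=
    (1 : Matrix (Fin Na) (Fin Na) ℂ) ⊗ₖ Aoc with hA2
  set Jc : Matrix (Fin Na × Fin No) (Fin Na × Fin No) ℂ :=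
    (Jmat Aa Ao d u α γ β δ).map (Complex.ofReal) with hJcdef
  have hprod : A1 * A2 = Aac ⊗ₖ Aoc := by
    rw [hA1, hA2, ← Matrix.mul_kronecker_mul, Matrix.mul_one, Matrix.one_mul]
  have hJc : Jc = ((-d + u*α : ℝ) : ℂ) • 1 + ((u*γ : ℝ) : ℂ) • A1
      + ((u*β : ℝ) : ℂ) • A2 + ((u*δ : ℝ) : ℂ) • (A1 * A2) := by
    rw [hprod]
    ext ⟨i, j⟩ ⟨k, l⟩
    simp only [hJcdef, Jmat, hA1, hA2, hAac, hAoc, Matrix.map_apply, Matrix.add_apply,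
      Matrix.smul_apply, Matrix.kroneckerMap_apply, Matrix.one_apply, smul_eq_mul,
      Prod.mk.injEq, Complex.ofReal_add, Complex.ofReal_mul]
    by_cases hik : i = k <;> by_cases hjl : j = l <;>
      simp [hik, hjl, Prod.ext_iff] <;> push_cast <;> ring
  have hc12 : A2 * A1 = A1 * A2 := by
    rw [hprod, hA1, hA2, ← Matrix.mul_kronecker_mul, Matrix.mul_one, Matrix.one_mul]
  have hc1 : Jc * A1 = A1 * Jc := by
    rw [hJc]
    simp only [add_mul, mul_add, Matrix.smul_mul, Matrix.mul_smul, Matrix.one_mul,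
      Matrix.mul_one, mul_assoc, hc12]
  have hc2 : Jc * A2 = A2 * Jc := by
    rw [hJc]
    simp only [add_mul, mul_add, Matrix.smul_mul, Matrix.mul_smul, Matrix.one_mul,
      Matrix.mul_one, ← mul_assoc, hc12]
  -- eigenvector of Jc
  obtain ⟨v, hv0, hv⟩ := (isRoot_charpoly_iff_exists_vec Jc η).mp hη
  set f : Module.End ℂ (Fin Na × Fin No → ℂ) := Jc.mulVecLin with hf
  set g1 : Module.End ℂ (Fin Na × Fin No → ℂ) := A1.mulVecLin with hg1def
  set g2 : Module.End ℂ (Fin Na × Fin No → ℂ) := A2.mulVecLin with hg2def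
  set p1 : Submodule ℂ (Fin Na × Fin No → ℂ) := Module.End.eigenspace f η with hp1def
  have hp1 : p1 ≠ ⊥ := by
    rw [Submodule.ne_bot_iff]
    exact ⟨v, Module.End.mem_eigenspace_iff.mpr (by simpa [hf] using hv), hv0⟩
  have hg1inv : ∀ x ∈ p1, g1 x ∈ p1 := by
    intro x hx
    have hx' : Jc.mulVec x = η • x := by
      simpa [hf] using Module.End.mem_eigenspace_iff.mp hx
    refine Module.End.mem_eigenspace_iff.mpr ?_
    show Jc.mulVec (A1.mulVec x) = η • A1.mulVec x
    rw [Matrix.mulVec_mulVec, hc1, ← Matrix.mulVec_mulVec, hx', Matrix.mulVec_smul]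
  obtain ⟨lam, v1, hv1p, hv10, hv1⟩ := exists_eigen_of_invariant p1 hp1 g1 hg1inv
  have hv1' : A1.mulVec v1 = lam • v1 := hv1
  have hv1J : Jc.mulVec v1 = η • v1 := by
    simpa [hf] using Module.End.mem_eigenspace_iff.mp hv1p
  -- lam ∈ specC Aa
  have hlam : lam ∈ specC Aa := by
    have hdet : (lam • (1 : Matrix (Fin Na × Fin No) (Fin Na × Fin No) ℂ) - A1).det = 0 := by
      rw [← Matrix.exists_mulVec_eq_zero_iff]
      exact ⟨v1, hv10, by
        rw [Matrix.sub_mulVec, Matrix.smul_mulVec, Matrix.one_mulVec, hv1', sub_self]⟩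
    have hfact : lam • (1 : Matrix (Fin Na × Fin No) (Fin Na × Fin No) ℂ) - A1
        = (lam • (1 : Matrix (Fin Na) (Fin Na) ℂ) - Aac) ⊗ₖ (1 : Matrix (Fin No) (Fin No) ℂ) := by
      ext ⟨i, j⟩ ⟨k, l⟩
      simp only [Matrix.sub_apply, Matrix.smul_apply, Matrix.one_apply,
        Matrix.kroneckerMap_apply, hA1, Prod.mk.injEq, smul_eq_mul, sub_mul]
      by_cases hik : i = k <;> by_cases hjl : j = l <;> simp [hik, hjl, Prod.ext_iff]
    rw [hfact, Matrix.det_kronecker, Matrix.det_one, one_pow, mul_one] at hdet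
    have hdet' : (lam • (1 : Matrix (Fin Na) (Fin Na) ℂ) - Aac).det = 0 := by
      have hcard : Fintype.card (Fin No) ≠ 0 := by simp; omega
      exact (pow_eq_zero_iff hcard).mp hdet
    exact (isRoot_charpoly_iff_det Aac lam).mpr hdet'
  -- second eigenspace
  set p2 : Submodule ℂ (Fin Na × Fin No → ℂ) := p1 ⊓ Module.End.eigenspace g1 lam with hp2def
  have hp2 : p2 ≠ ⊥ := by
    rw [Submodule.ne_bot_iff]
    refine ⟨v1, ⟨hv1p, Module.End.mem_eigenspace_iff.mpr (by simpa [hg1def] using hv1')⟩, hv10⟩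
  have hg2inv : ∀ x ∈ p2, g2 x ∈ p2 := by
    rintro x ⟨hx1, hx2⟩
    have hxJ : Jc.mulVec x = η • x := by
      simpa [hf] using Module.End.mem_eigenspace_iff.mp hx1
    have hxA1 : A1.mulVec x = lam • x := by
      simpa [hg1def] using Module.End.mem_eigenspace_iff.mp hx2
    constructor
    · refine Module.End.mem_eigenspace_iff.mpr ?_
      show Jc.mulVec (A2.mulVec x) = η • A2.mulVec x
      rw [Matrix.mulVec_mulVec, hc2, ← Matrix.mulVec_mulVec, hxJ, Matrix.mulVec_smul]
    · refine Module.End.mem_eigenspace_iff.mpr ?_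
      show A1.mulVec (A2.mulVec x) = lam • A2.mulVec x
      rw [Matrix.mulVec_mulVec, ← hc12, ← Matrix.mulVec_mulVec, hxA1, Matrix.mulVec_smul]
  obtain ⟨m, w, hwp, hw0, hw2⟩ := exists_eigen_of_invariant p2 hp2 g2 hg2inv
  have hw2' : A2.mulVec w = m • w := hw2
  have hwJ : Jc.mulVec w = η • w := by
    simpa [hf] using Module.End.mem_eigenspace_iff.mp hwp.1
  have hwA1 : A1.mulVec w = lam • w := by
    simpa [hg1def] using Module.End.mem_eigenspace_iff.mp hwp.2
  -- m ∈ specC Ao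
  have hm : m ∈ specC Ao := by
    have hdet : (m • (1 : Matrix (Fin Na × Fin No) (Fin Na × Fin No) ℂ) - A2).det = 0 := by
      rw [← Matrix.exists_mulVec_eq_zero_iff]
      exact ⟨w, hw0, by
        rw [Matrix.sub_mulVec, Matrix.smul_mulVec, Matrix.one_mulVec, hw2', sub_self]⟩
    have hfact : m • (1 : Matrix (Fin Na × Fin No) (Fin Na × Fin No) ℂ) - A2
        = (1 : Matrix (Fin Na) (Fin Na) ℂ) ⊗ₖ (m • (1 : Matrix (Fin No) (Fin No) ℂ) - Aoc) := by
      ext ⟨i, j⟩ ⟨k, l⟩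
      simp only [Matrix.sub_apply, Matrix.smul_apply, Matrix.one_apply,
        Matrix.kroneckerMap_apply, hA2, Prod.mk.injEq, smul_eq_mul, mul_sub]
      by_cases hik : i = k <;> by_cases hjl : j = l <;> simp [hik, hjl, Prod.ext_iff]
    rw [hfact, Matrix.det_kronecker, Matrix.det_one, one_pow, one_mul] at hdet
    have hdet' : (m • (1 : Matrix (Fin No) (Fin No) ℂ) - Aoc).det = 0 := by
      have hcard : Fintype.card (Fin Na) ≠ 0 := by simp; omega
      exact (pow_eq_zero_iff hcard).mp hdet
    exact (isRoot_charpoly_iff_det Aoc m).mpr hdet'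
  -- compute η
  have hηeq : η = ((-d + u*α : ℝ) : ℂ) + ((u*γ : ℝ) : ℂ) * lam + ((u*β : ℝ) : ℂ) * m
      + ((u*δ : ℝ) : ℂ) * (lam * m) := by
    set s : ℂ := ((-d + u*α : ℝ) : ℂ) + ((u*γ : ℝ) : ℂ) * lam + ((u*β : ℝ) : ℂ) * m
      + ((u*δ : ℝ) : ℂ) * (lam * m) with hs
    have h1 : Jc.mulVec w = s • w := by
      rw [hJc, Matrix.add_mulVec, Matrix.add_mulVec, Matrix.add_mulVec,
        Matrix.smul_mulVec, Matrix.smul_mulVec, Matrix.smul_mulVec,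
        Matrix.smul_mulVec, Matrix.one_mulVec, hwA1, hw2',
        ← Matrix.mulVec_mulVec, hw2', Matrix.mulVec_smul, hwA1, hs]
      funext i
      simp [smul_smul]
      ring
    have h2 : (η - s) • w = 0 := by
      rw [sub_smul, ← hwJ, h1, sub_self]
    obtain ⟨i, hi⟩ := Function.ne_iff.mp hw0
    have h3 : (η - s) * w i = 0 := congrFun h2 i
    have h4 : η - s = 0 := by
      rcases mul_eq_zero.mp h3 with h | h
      · exact h
      · exact absurd h hi
    exact sub_eq_zero.mp h4
  -- real part estimate
  set r : ℝ := ((α : ℂ) + (γ : ℂ) * lam + (β : ℂ) * m + (δ : ℂ) * lam * m).re with hr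
  have hrmem : r ∈ {x : ℝ | ∃ l ∈ specC Aa, ∃ m ∈ specC Ao,
      x = ((α : ℂ) + (γ : ℂ) * l + (β : ℂ) * m + (δ : ℂ) * l * m).re} :=
    ⟨lam, hlam, m, hm, rfl⟩
  have hrK : r ≤ K := hK.2 hrmem
  have hre : η.re = -d + u * r := by
    rw [hηeq, hr]
    simp [Complex.add_re, Complex.mul_re, Complex.ofReal_re, Complex.ofReal_im,
      Complex.add_im, Complex.mul_im]
    ring
  have huK : u * K < d := (lt_div_iff₀ hKpos).mp hu'
  have hur : u * r ≤ u * K := mul_le_mul_of_nonneg_left hrK hu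
  rw [hre]
  linarith
end
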